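/- arXiv:1401.5536 — 4 statements merged into one kernel-verified Lean document; each statement's English description precedes it below -/
import Mathlib

section
/- For every real s ≥ 1, with ε(s) = max(0, log₂((1/6)·ln s)/log₂ s) and N(s) = ⌊√(1+s^{1-ε(s)})⌋, the gap satisfies (1/2)·log₂(1+s) - max(0, log₂ N(s) - (1/2)·log₂(e/2) - 1) ≤ max(0, (1/2)·log₂((1/6)·ln s)) + (1/2)·log₂(8e). -/
open Real

/-! With `u = (1/6) ln s`, the exponent `ε` is chosen so that `s ^ ε ≤ max 1 u`, while
`1 + s ≤ s ^ ε (1 + s ^ (1 - ε))`; hence the capacity `(1/2) log₂ (1 + s)` exceeds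
`(1/2) log₂ (1 + s ^ (1 - ε)) = log₂ √(1 + s ^ (1 - ε))` by at most `(1/2) max 0 (log₂ u)`.
Taking the floor of that square root costs at most one bit, since `x / 2 ≤ ⌊x⌋` for `x ≥ 1`,
and the remaining constants add up to `(1/2) log₂ (8e) = (1/2) log₂ (e/2) + 2`. -/

theorem Int.half_le_floor {K : Type*} [Field K] [LinearOrder K] [IsStrictOrderedRing K]
    [FloorRing K] {x : K} (hx : 1 ≤ x) : x / 2 ≤ ⌊x⌋ := by
  have h_one : (1 : K) ≤ ⌊x⌋ := by exact_mod_cast Int.le_floor.mpr (by exact_mod_cast hx)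
  linarith [Int.sub_one_lt_floor x]

namespace Real

theorem logb_two_sub_one_le_logb_two_floor {x : ℝ} (hx : 1 ≤ x) :
    logb 2 x - 1 ≤ logb 2 ⌊x⌋ := by
  calc logb 2 x - 1 = logb 2 (x / 2) := by
        rw [logb_div (by positivity) two_ne_zero, logb_self_eq_one one_lt_two]
    _ ≤ logb 2 ⌊x⌋ := logb_le_logb_of_le one_lt_two (by positivity) (Int.half_le_floor hx)

theorem logb_sqrt {b x : ℝ} (hx : 0 ≤ x) : logb b (√x) = (1 / 2) * logb b x := by
  rw [logb, log_sqrt hx, logb]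
  ring

theorem one_add_le_rpow_mul_one_add_rpow_sub {s t : ℝ} (hs : 1 ≤ s) (ht : 0 ≤ t) :
    1 + s ≤ s ^ t * (1 + s ^ (1 - t)) := by
  have h_split : s ^ t * s ^ (1 - t) = s := by
    rw [← rpow_add (by positivity), add_sub_cancel, rpow_one]
  nlinarith [one_le_rpow hs ht]

theorem logb_one_add_le {b s t : ℝ} (hb : 1 < b) (hs : 1 ≤ s) (ht : 0 ≤ t) :
    logb b (1 + s) ≤ t * logb b s + logb b (1 + s ^ (1 - t)) := by
  have hs₀ : 0 < s := by positivity
  calc logb b (1 + s) ≤ logb b (s ^ t * (1 + s ^ (1 - t))) :=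
        logb_le_logb_of_le hb (by positivity) (one_add_le_rpow_mul_one_add_rpow_sub hs ht)
    _ = t * logb b s + logb b (1 + s ^ (1 - t)) := by
        rw [logb_mul (by positivity) (by positivity), logb_rpow_eq_mul_logb_of_pos hs₀]

theorem logb_two_eight_mul_exp_one :
    logb 2 (8 * exp 1) = logb 2 (exp 1 / 2) + 4 := by
  have h_sixteen : logb 2 (16 : ℝ) = 4 := by
    rw [show (16 : ℝ) = 2 ^ 4 by norm_num, logb_pow, logb_self_eq_one one_lt_two]
    norm_num
  rw [show 8 * exp 1 = exp 1 / 2 * 16 by ring, logb_mul (by positivity) (by norm_num),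
    h_sixteen]

end Real

theorem max_zero_div_mul_le {a b : ℝ} (hb : 0 ≤ b) : max 0 (a / b) * b ≤ max 0 a := by
  rcases hb.eq_or_lt with rfl | hb
  · simp
  · rw [max_mul_of_nonneg _ _ hb.le, zero_mul, div_mul_cancel₀ _ hb.ne']

/-- For `s ≥ 1`, with `ε(s) = max(0, log₂((1/6)ln s)/log₂ s)` and
`N(s) = ⌊√(1+s^(1-ε(s)))⌋`, the gap between Gaussian capacity and the PAM rate
lower bound satisfies
`(1/2)log₂(1+s) - max(0, log₂ N(s) - (1/2)log₂(e/2) - 1)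
  ≤ max(0, (1/2)log₂((1/6)ln s)) + (1/2)log₂(8e)`. -/
theorem pam_gap_loglog (s : ℝ) (hs : 1 ≤ s) :
    (1 / 2) * Real.logb 2 (1 + s) -
      max 0 (Real.logb 2
          (⌊Real.sqrt (1 + s ^ (1 - max 0
              (Real.logb 2 ((1 / 6) * Real.log s) / Real.logb 2 s)))⌋ : ℝ) -
        (1 / 2) * Real.logb 2 (Real.exp 1 / 2) - 1) ≤
    max 0 ((1 / 2) * Real.logb 2 ((1 / 6) * Real.log s)) +
      (1 / 2) * Real.logb 2 (8 * Real.exp 1) := by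
  set a := logb 2 ((1 / 6) * log s)
  set ε := max 0 (a / logb 2 s)
  set x := s ^ (1 - ε)
  have h_capacity : logb 2 (1 + s) ≤ max 0 a + logb 2 (1 + x) :=
    (logb_one_add_le one_lt_two hs (le_max_left _ _)).trans <| by
      gcongr
      exact max_zero_div_mul_le (logb_nonneg one_lt_two hs)
  have h_floor : (1 / 2) * logb 2 (1 + x) - 1 ≤ logb 2 ⌊√(1 + x)⌋ := by
    have hx : 0 ≤ x := by positivity
    rw [← logb_sqrt (by positivity)]
    exact logb_two_sub_one_le_logb_two_floor (one_le_sqrt.mpr (by linarith))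
  have h_half : (1 / 2) * max 0 a = max 0 ((1 / 2) * a) := by
    rw [mul_max_of_nonneg _ _ (by norm_num), mul_zero]
  rw [← h_half, logb_two_eight_mul_exp_one]
  linarith [le_max_right 0 (logb 2 ⌊√(1 + x)⌋ - (1 / 2) * logb 2 (exp 1 / 2) - 1)]
end

section
/- For every real s ≥ 1, with ε(s) = max(0, log₂((1/6)·ln s)/log₂ s) and N(s) = ⌊√(1+s^{1-ε(s)})⌋, one has log₂(1 + (N(s)-1)·exp(-3s/(N(s)²-1))) ≤ 1 whenever N(s) ≥ 2. -/
/-!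
Write `E = ε(s)`, `t = s^(1-E)` and `N = N(s)`, so that `N² - 1 ≤ t` and `s^E · t = s`.
Hence `3s/(N² - 1) ≥ 3 s^E`, and the choice of `ε` gives `s^E ≥ (1/6) ln s`
(with equality when `ε > 0`), so the exponential factor is at most `s^(-1/2)`.
On the other side `(N - 1)² ≤ N² - 1 ≤ t ≤ s`, so `N - 1 ≤ √s`, and the product
`(N - 1)·exp(-3s/(N² - 1))` is at most `1`.
-/

open Real

namespace Real

theorem rpow_logb_div_logb {b s a : ℝ} (b_pos : 0 < b) (b_ne_one : b ≠ 1) (hs₀ : 0 < s)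
    (hs₁ : s ≠ 1) (ha : 0 < a) : s ^ (logb b a / logb b s) = a := by
  rw [logb, logb, div_div_div_cancel_right₀ (log_ne_zero_of_pos_of_ne_one b_pos b_ne_one)]
  exact rpow_logb hs₀ hs₁ ha

theorem le_rpow_max_zero_logb_div_logb {b s : ℝ} (b_pos : 0 < b) (b_ne_one : b ≠ 1)
    (hs : 1 < s) (a : ℝ) : a ≤ s ^ max 0 (logb b a / logb b s) := by
  rcases le_or_gt a 0 with ha | ha
  · exact ha.trans (rpow_pos_of_pos (by linarith) _).le
  · calc a = s ^ (logb b a / logb b s) :=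
          (rpow_logb_div_logb b_pos b_ne_one (by linarith) hs.ne' ha).symm
      _ ≤ s ^ max 0 (logb b a / logb b s) := rpow_le_rpow_of_exponent_le hs.le (le_max_right _ _)

theorem sq_floor_sqrt_le {x : ℝ} (hx : 0 ≤ x) : (⌊√x⌋ : ℝ) ^ 2 ≤ x := by
  have h₀ : (0 : ℝ) ≤ ⌊√x⌋ := by exact_mod_cast Int.floor_nonneg.2 (sqrt_nonneg x)
  calc (⌊√x⌋ : ℝ) ^ 2 ≤ √x ^ 2 := pow_le_pow_left₀ h₀ (Int.floor_le _) 2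
    _ = x := sq_sqrt hx

theorem sub_one_le_sqrt_of_sq_sub_one_le {x s : ℝ} (hx : 1 ≤ x) (h : x ^ 2 - 1 ≤ s) :
    x - 1 ≤ √s :=
  (le_abs_self _).trans (abs_le_sqrt (by nlinarith))

theorem mul_exp_neg_le_one_of_le_sqrt {x s c : ℝ} (hs : 0 < s) (hx : x ≤ √s)
    (hc : log s / 2 ≤ c) : x * exp (-c) ≤ 1 :=
  calc x * exp (-c) ≤ √s * exp (-(log s / 2)) :=
        mul_le_mul hx (exp_le_exp.2 (neg_le_neg hc)) (exp_pos _).le (sqrt_nonneg s)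
    _ = 1 := by
      have hs' := sqrt_pos.2 hs
      rw [← log_sqrt hs.le, exp_neg, exp_log hs', mul_inv_cancel₀ hs'.ne']

end Real

/-- The exponent `ε(s)`. -/
noncomputable def pamExponent (s : ℝ) : ℝ :=
  max 0 (logb 2 ((1 / 6) * log s) / logb 2 s)

theorem pamExponent_nonneg (s : ℝ) : 0 ≤ pamExponent s :=
  le_max_left _ _

theorem one_sixth_mul_log_le_rpow_pamExponent {s : ℝ} (hs : 1 ≤ s) :
    (1 / 6) * log s ≤ s ^ pamExponent s := by
  rcases hs.eq_or_lt with rfl | hs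
  · simp
  · exact le_rpow_max_zero_logb_div_logb two_pos (by norm_num) hs _

/-- For `s ≥ 1`, with `ε(s) = max(0, log₂((1/6)ln s)/log₂ s)` and
`N(s) = ⌊√(1+s^(1-ε(s)))⌋`, whenever `N(s) ≥ 2` one has
`log₂(1 + (N(s)-1)·exp(-3s/(N(s)²-1))) ≤ 1`. -/
theorem pam_penalty_le_one (s : ℝ) (hs : 1 ≤ s)
    (hN : 2 ≤ ⌊Real.sqrt (1 + s ^ (1 - max 0
        (Real.logb 2 ((1 / 6) * Real.log s) / Real.logb 2 s)))⌋) :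
    Real.logb 2 (1 +
        ((⌊Real.sqrt (1 + s ^ (1 - max 0
            (Real.logb 2 ((1 / 6) * Real.log s) / Real.logb 2 s)))⌋ : ℝ) - 1) *
        Real.exp (-3 * s /
          ((⌊Real.sqrt (1 + s ^ (1 - max 0
              (Real.logb 2 ((1 / 6) * Real.log s) / Real.logb 2 s)))⌋ : ℝ) ^ 2 - 1))) ≤ 1 := by
  change logb 2 (1 + ((⌊√(1 + s ^ (1 - pamExponent s))⌋ : ℝ) - 1) *
    exp (-3 * s / ((⌊√(1 + s ^ (1 - pamExponent s))⌋ : ℝ) ^ 2 - 1))) ≤ 1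
  replace hN : (2 : ℝ) ≤ ⌊√(1 + s ^ (1 - pamExponent s))⌋ := by exact_mod_cast hN
  set E := pamExponent s
  set N : ℝ := (⌊√(1 + s ^ (1 - E))⌋ : ℝ)
  have hs₀ : 0 < s := by linarith
  have hN_sq : N ^ 2 - 1 ≤ s ^ (1 - E) := by
    linarith [sq_floor_sqrt_le (x := 1 + s ^ (1 - E)) (by positivity)]
  have hts : s ^ (1 - E) ≤ s := rpow_le_self_of_one_le hs (sub_le_self _ (pamExponent_nonneg s))
  have hN_sqrt : N - 1 ≤ √s := sub_one_le_sqrt_of_sq_sub_one_le (by linarith) (hN_sq.trans hts)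
  have hrate : log s / 2 ≤ 3 * s / (N ^ 2 - 1) :=
    calc log s / 2 = 3 * ((1 / 6) * log s) := by ring
      _ ≤ 3 * s ^ E := by gcongr; exact one_sixth_mul_log_le_rpow_pamExponent hs
      _ = 3 * s / s ^ (1 - E) := by
        rw [rpow_sub hs₀, rpow_one, mul_div_assoc, div_div_cancel₀ hs₀.ne']
      _ ≤ 3 * s / (N ^ 2 - 1) := by gcongr; nlinarith
  have hpenalty := mul_exp_neg_le_one_of_le_sqrt hs₀ hN_sqrt hrate
  rw [neg_mul, neg_div]
  have hpos : 0 < 1 + (N - 1) * exp (-(3 * s / (N ^ 2 - 1))) :=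
    add_pos_of_pos_of_nonneg one_pos (mul_nonneg (by linarith) (exp_pos _).le)
  calc logb 2 (1 + (N - 1) * exp (-(3 * s / (N ^ 2 - 1)))) ≤ logb 2 2 :=
        logb_le_logb_of_le one_lt_two hpos (by linarith)
    _ = 1 := logb_self_eq_one one_lt_two
end

section
/- Fix α ≥ 0 and ε with 0 < ε ≤ min(1, |α - 1|) when α ≠ 1 (and set β = min(1, |α-1|) - ε ≥ 0). Define d₁ = β (valid since 1 - β > 0), d₂ = (β if α - 1 - β > 0 else 0) + 1 - min(β, α), and the sum constraint d₁ + d₂ ≤ (β if 1 - α - β > 0 else 0) + α. Then the achievable sum gDoF max over these constraints equals 1 - ε for 0 ≤ α < 1, α - ε for 1 ≤ α < 2, and 2 - ε for α ≥ 2. -/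
/-!
For `α < 1` the sum constraint `β + α` is the smaller bound and `β = 1 - α - ε`; for `α > 1`
(forced by `0 < ε ≤ |α - 1|`) it is `d₁ + d₂ = β + 1`, with `β = min 1 (α - 1) - ε`.
-/

/-- `min (d₁ + d₂) sumBound`, with `β` free. -/
noncomputable def sumGdof (α β : ℝ) : ℝ :=
  min (β + ((if α - 1 - β > 0 then β else 0) + 1 - min β α)) ((if 1 - α - β > 0 then β else 0) + α)

section

variable {α β : ℝ}

lemma sumGdof_of_lt_one_sub (hβ : 0 ≤ β) (h : β < 1 - α) : sumGdof α β = β + α := by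
  rw [sumGdof, if_neg (by linarith), if_pos (by linarith)]
  exact min_eq_right (by linarith [min_le_left β α])

lemma sumGdof_of_lt_sub_one (hβ : 0 ≤ β) (h : β < α - 1) : sumGdof α β = β + 1 := by
  rw [sumGdof, if_pos (by linarith), if_neg (by linarith), min_eq_left (by linarith : β ≤ α)]
  exact (min_eq_left (by linarith)).trans (by ring)

end

/-- gDoF evaluation for the G-IC-OR: with `β = min(1,|α-1|) - ε` (where
`0 < ε ≤ min(1,|α-1|)`), `d₁ = β`,
`d₂ = (β if α-1-β > 0 else 0) + 1 - min(β,α)`, and the sum constraint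
`(β if 1-α-β > 0 else 0) + α`, the achievable sum gDoF
`min(d₁+d₂, sum constraint)` equals `1-ε` for `0 ≤ α < 1`, `α-ε` for
`1 ≤ α < 2`, and `2-ε` for `α ≥ 2`. -/
theorem gicor_sum_gdof (α ε : ℝ) (hα : 0 ≤ α)
    (hε0 : 0 < ε) (hε1 : ε ≤ min 1 |α - 1|) :
    let β := min 1 |α - 1| - ε
    let d₁ := β
    let d₂ := (if α - 1 - β > 0 then β else 0) + 1 - min β α
    let sumBound := (if 1 - α - β > 0 then β else 0) + α
    (0 ≤ β) ∧
    (α < 1 → min (d₁ + d₂) sumBound = 1 - ε) ∧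
    (1 ≤ α → α < 2 → min (d₁ + d₂) sumBound = α - ε) ∧
    (2 ≤ α → min (d₁ + d₂) sumBound = 2 - ε) := by
  intro β d₁ d₂ sumBound
  show 0 ≤ β ∧ (α < 1 → sumGdof α β = 1 - ε) ∧ (1 ≤ α → α < 2 → sumGdof α β = α - ε) ∧
    (2 ≤ α → sumGdof α β = 2 - ε)
  have hβ : 0 ≤ β := sub_nonneg.mpr hε1
  have h_above (hα1 : 1 ≤ α) : sumGdof α β = min 1 (α - 1) + 1 - ε := by
    have hβ_eq : β = min 1 (α - 1) - ε := by
      show min 1 |α - 1| - ε = _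
      rw [abs_of_nonneg (sub_nonneg.mpr hα1)]
    rw [sumGdof_of_lt_sub_one hβ (by linarith [min_le_right 1 (α - 1)]), hβ_eq]
    ring
  refine ⟨hβ, fun hα1 => ?_, fun hα1 hα2 => ?_, fun hα2 => ?_⟩
  · have hβ_eq : β = 1 - α - ε := by
      show min 1 |α - 1| - ε = _
      rw [abs_of_neg (by linarith), min_eq_right (by linarith)]
      ring
    rw [sumGdof_of_lt_one_sub hβ (by linarith)]
    linarith
  · rw [h_above hα1, min_eq_right (by linarith)]
    ring
  · rw [h_above (by linarith), min_eq_left (by linarith)]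
    ring
end

section
/- Let s₁,…,s_N be distinct reals with minimum distance d_min > 0, let γ ≥ 0, and suppose the Gaussian mixture density P_Y(y) = Σ_i p_i·N(y; √γ s_i, 1) has well-defined differential entropy h(Y) = -∫ P_Y log₂ P_Y dy. If the weights are arbitrary probabilities p_i, then h(Y) ≥ log₂(√(4π)) - log₂(Σ_i p_i² + (1 - Σ_i p_i²)·exp(-γ d_min²/4)); in particular for uniform weights p_i = 1/N, h(Y) ≥ log₂(N√(4π)) - log₂(1 + (N-1)·exp(-γ d_min²/4)). -/
/-!
By Jensen's inequality for the concave logarithm,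
`h(Y) = -𝔼[log P_Y(Y)] ≥ -log 𝔼[P_Y(Y)] = -log ∫ P_Y²`. Completing the square, the product of
two Gaussian densities is the density at one mean of the Gaussian centred at the other with the
variances added, times a Gaussian density in `y`; hence `∫ P_Y² = ∑ᵢⱼ pᵢ pⱼ N(√γ sᵢ; √γ sⱼ, 2)`.
The diagonal terms are `1/√(4π)`, and separation of the means bounds the others by
`exp(-γ d_min²/4)/√(4π)`.
-/

open Real MeasureTheory Finset ProbabilityTheory
open scoped NNReal

-- The tangent-line bound `log t ≤ t - 1` at `t = x / c`, multiplied by `x`.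
theorem Real.mul_log_le_mul_log_add_sq_div_sub {x c : ℝ} (hx : 0 ≤ x) (hc : 0 < c) :
    x * log x ≤ x * log c + x ^ 2 / c - x := by
  rcases hx.eq_or_lt with rfl | hx
  · simp
  have h := mul_le_mul_of_nonneg_left (log_le_sub_one_of_pos (div_pos hx hc)) hx.le
  rw [log_div hx.ne' hc.ne'] at h
  have : x * (x / c - 1) = x ^ 2 / c - x := by ring
  linarith

section Jensen

variable {α : Type*} [MeasurableSpace α] {μ : Measure α} {f : α → ℝ}

theorem integral_sq_pos_of_integral_ne_zero (hsq : Integrable (fun x => f x ^ 2) μ)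
    (hf : ∫ x, f x ∂μ ≠ 0) :
    0 < ∫ x, f x ^ 2 ∂μ := by
  rw [integral_pos_iff_support_of_nonneg (fun x => sq_nonneg (f x)) hsq,
    Function.support_pow _ two_ne_zero, pos_iff_ne_zero]
  intro h
  exact hf (integral_eq_zero_of_ae (ae_iff.2 h))

theorem integral_mul_log_le_log_integral_sq (hf : 0 ≤ᵐ[μ] f) (hfi : Integrable f μ)
    (hf1 : ∫ x, f x ∂μ = 1) (hsq : Integrable (fun x => f x ^ 2) μ)
    (hlog : Integrable (fun x => f x * log (f x)) μ) :
    ∫ x, f x * log (f x) ∂μ ≤ log (∫ x, f x ^ 2 ∂μ) := by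
  set c := ∫ x, f x ^ 2 ∂μ
  have hc : 0 < c := integral_sq_pos_of_integral_ne_zero hsq (by rw [hf1]; exact one_ne_zero)
  have hI : Integrable (fun x => f x * log c + f x ^ 2 / c) μ :=
    (hfi.mul_const _).add (hsq.div_const _)
  calc ∫ x, f x * log (f x) ∂μ
      ≤ ∫ x, (f x * log c + f x ^ 2 / c - f x) ∂μ := by
        refine integral_mono_ae hlog (hI.sub hfi) ?_
        filter_upwards [hf] with x hx using mul_log_le_mul_log_add_sq_div_sub hx hc
    _ = log c := by
        rw [integral_sub hI hfi, integral_add (hfi.mul_const _) (hsq.div_const _),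
          integral_mul_const, integral_div, hf1, div_self hc.ne']
        ring

theorem integral_mul_logb_le_logb_integral_sq {b : ℝ} (hb : 1 < b) (hf : 0 ≤ᵐ[μ] f)
    (hfi : Integrable f μ) (hf1 : ∫ x, f x ∂μ = 1) (hsq : Integrable (fun x => f x ^ 2) μ)
    (hlogb : Integrable (fun x => f x * logb b (f x)) μ) :
    ∫ x, f x * logb b (f x) ∂μ ≤ logb b (∫ x, f x ^ 2 ∂μ) := by
  have hb' : 0 < log b := log_pos hb
  have heq : (fun x => f x * logb b (f x)) = fun x => f x * log (f x) / log b := by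
    ext x
    rw [logb, mul_div_assoc]
  have hlog : Integrable (fun x => f x * log (f x)) μ := by
    convert hlogb.mul_const (log b) using 2 with x
    rw [logb, mul_div_assoc', div_mul_cancel₀ _ hb'.ne']
  rw [heq, integral_div, logb]
  gcongr
  exact integral_mul_log_le_log_integral_sq hf hfi hf1 hsq hlog

end Jensen

section GaussianProduct

variable {v w : ℝ≥0}

theorem gaussianPDFReal_mul_gaussianPDFReal (hv : v ≠ 0) (hw : w ≠ 0) (a b y : ℝ) :
    gaussianPDFReal a v y * gaussianPDFReal b w y =
      gaussianPDFReal a (v + w) b *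
        gaussianPDFReal ((a * w + b * v) / (v + w)) (v * w / (v + w)) y := by
  have hv' : (0 : ℝ) < v := by positivity
  have hw' : (0 : ℝ) < w := by positivity
  simp only [gaussianPDFReal, NNReal.coe_add, NNReal.coe_mul, NNReal.coe_div]
  rw [mul_mul_mul_comm, mul_mul_mul_comm _ (rexp _), ← mul_inv, ← mul_inv,
    ← sqrt_mul (by positivity), ← sqrt_mul (by positivity), ← exp_add, ← exp_add]
  congr 1
  · field_simp
  · congr 1
    field_simp
    ring

theorem integrable_gaussianPDFReal_mul_gaussianPDFReal (hv : v ≠ 0) (hw : w ≠ 0) (a b : ℝ) :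
    Integrable (fun y => gaussianPDFReal a v y * gaussianPDFReal b w y) := by
  simp only [gaussianPDFReal_mul_gaussianPDFReal hv hw]
  exact (integrable_gaussianPDFReal _ _).const_mul _

theorem integral_gaussianPDFReal_mul_gaussianPDFReal (hv : v ≠ 0) (hw : w ≠ 0) (a b : ℝ) :
    ∫ y, gaussianPDFReal a v y * gaussianPDFReal b w y = gaussianPDFReal a (v + w) b := by
  simp only [gaussianPDFReal_mul_gaussianPDFReal hv hw]
  rw [integral_const_mul, integral_gaussianPDFReal_eq_one _ (by positivity), mul_one]

end GaussianProduct

noncomputable def gaussianMixturePDFReal {ι : Type*} [Fintype ι] (w m : ι → ℝ) (v : ℝ≥0)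
    (y : ℝ) : ℝ :=
  ∑ i, w i * gaussianPDFReal (m i) v y

section GaussianMixture

variable {ι : Type*} [Fintype ι] (w m : ι → ℝ) {v : ℝ≥0}

theorem gaussianMixturePDFReal_nonneg {w : ι → ℝ} (hw : ∀ i, 0 ≤ w i) (y : ℝ) :
    0 ≤ gaussianMixturePDFReal w m v y :=
  sum_nonneg fun i _ => mul_nonneg (hw i) (gaussianPDFReal_nonneg _ _ _)

theorem integrable_gaussianMixturePDFReal : Integrable (gaussianMixturePDFReal w m v) :=
  integrable_finsetSum _ fun _ _ => (integrable_gaussianPDFReal _ _).const_mul _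

theorem integral_gaussianMixturePDFReal (hv : v ≠ 0) :
    ∫ y, gaussianMixturePDFReal w m v y = ∑ i, w i := by
  simp only [gaussianMixturePDFReal]
  rw [integral_finsetSum _ fun _ _ => (integrable_gaussianPDFReal _ _).const_mul _]
  simp only [integral_const_mul, integral_gaussianPDFReal_eq_one _ hv, mul_one]

theorem gaussianMixturePDFReal_sq (y : ℝ) :
    gaussianMixturePDFReal w m v y ^ 2 =
      ∑ i, ∑ j, w i * w j * (gaussianPDFReal (m i) v y * gaussianPDFReal (m j) v y) := by
  rw [gaussianMixturePDFReal, sq, sum_mul_sum]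
  exact sum_congr rfl fun i _ => sum_congr rfl fun j _ => by ring

theorem integrable_gaussianMixturePDFReal_sq (hv : v ≠ 0) :
    Integrable (fun y => gaussianMixturePDFReal w m v y ^ 2) := by
  simp only [gaussianMixturePDFReal_sq]
  exact integrable_finsetSum _ fun _ _ => integrable_finsetSum _ fun _ _ =>
    (integrable_gaussianPDFReal_mul_gaussianPDFReal hv hv _ _).const_mul _

theorem integral_gaussianMixturePDFReal_sq (hv : v ≠ 0) :
    ∫ y, gaussianMixturePDFReal w m v y ^ 2 =
      ∑ i, ∑ j, w i * w j * gaussianPDFReal (m i) (v + v) (m j) := by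
  simp only [gaussianMixturePDFReal_sq]
  rw [integral_finsetSum _ fun _ _ => integrable_finsetSum _ fun _ _ =>
    (integrable_gaussianPDFReal_mul_gaussianPDFReal hv hv _ _).const_mul _]
  refine sum_congr rfl fun i _ => ?_
  rw [integral_finsetSum _ fun _ _ =>
    (integrable_gaussianPDFReal_mul_gaussianPDFReal hv hv _ _).const_mul _]
  simp only [integral_const_mul, integral_gaussianPDFReal_mul_gaussianPDFReal hv hv]

end GaussianMixture

theorem sum_sum_mul_mul_le_of_offDiag_le {ι : Type*} [Fintype ι] {p : ι → ℝ}
    (hp : ∀ i, 0 ≤ p i) {A : ι → ι → ℝ} {D E : ℝ} (hdiag : ∀ i, A i i = D)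
    (hoff : ∀ i j, i ≠ j → A i j ≤ D * E) :
    ∑ i, ∑ j, p i * p j * A i j ≤
      D * (∑ i, p i ^ 2 + ((∑ i, p i) ^ 2 - ∑ i, p i ^ 2) * E) := by
  classical
  have hterm : ∀ i j, p i * p j * A i j ≤
      p i * p j * (D * E) + if i = j then p i ^ 2 * (D * (1 - E)) else 0 := by
    intro i j
    by_cases hij : i = j
    · subst hij
      rw [hdiag, if_pos rfl]
      exact le_of_eq (by ring)
    · simp only [hij, if_false, add_zero]
      exact mul_le_mul_of_nonneg_left (hoff i j hij) (mul_nonneg (hp i) (hp j))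
  calc ∑ i, ∑ j, p i * p j * A i j
      ≤ ∑ i, ∑ j, (p i * p j * (D * E) + if i = j then p i ^ 2 * (D * (1 - E)) else 0) :=
        sum_le_sum fun i _ => sum_le_sum fun j _ => hterm i j
    _ = D * (∑ i, p i ^ 2 + ((∑ i, p i) ^ 2 - ∑ i, p i ^ 2) * E) := by
        simp only [sum_add_distrib, sum_ite_eq, mem_univ, if_true, ← sum_mul, ← mul_sum, sq]
        ring

section GaussianKernel

variable {v : ℝ≥0}

theorem gaussianPDFReal_self (μ : ℝ) : gaussianPDFReal μ v μ = (√(2 * π * v))⁻¹ := by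
  simp [gaussianPDFReal]

theorem gaussianPDFReal_le_of_le_abs {μ x d : ℝ} (hd₀ : 0 ≤ d) (hd : d ≤ |x - μ|) :
    gaussianPDFReal μ v x ≤ (√(2 * π * v))⁻¹ * exp (-d ^ 2 / (2 * v)) := by
  have hsq : d ^ 2 ≤ (x - μ) ^ 2 := by
    rw [← sq_abs (x - μ)]
    exact pow_le_pow_left₀ hd₀ hd 2
  unfold gaussianPDFReal
  gcongr

end GaussianKernel

theorem integral_gaussianMixturePDFReal_one_sq_le {ι : Type*} [Fintype ι] {w m : ι → ℝ}
    (hw : ∀ i, 0 ≤ w i) {d : ℝ} (hd₀ : 0 ≤ d) (hd : ∀ i j, i ≠ j → d ≤ |m i - m j|) :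
    ∫ y, gaussianMixturePDFReal w m 1 y ^ 2 ≤
      (√(4 * π))⁻¹ * (∑ i, w i ^ 2 + ((∑ i, w i) ^ 2 - ∑ i, w i ^ 2) * exp (-d ^ 2 / 4)) := by
  have hvar : 2 * π * ((1 + 1 : ℝ≥0) : ℝ) = 4 * π := by push_cast; ring
  rw [integral_gaussianMixturePDFReal_sq _ _ one_ne_zero]
  refine sum_sum_mul_mul_le_of_offDiag_le hw (fun i => ?_) fun i j hij => ?_
  · rw [gaussianPDFReal_self, hvar]
  · calc gaussianPDFReal (m i) (1 + 1) (m j)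
        ≤ _ := gaussianPDFReal_le_of_le_abs hd₀ (abs_sub_comm (m i) (m j) ▸ hd i j hij)
      _ = _ := by rw [hvar]; norm_num

theorem sum_sq_add_one_sub_sum_sq_mul_of_uniform {N : ℕ} (hN : N ≠ 0) {p : Fin N → ℝ}
    (hp : ∀ i, p i = 1 / N) (E : ℝ) :
    ∑ i, p i ^ 2 + (1 - ∑ i, p i ^ 2) * E = (1 + (N - 1) * E) / N := by
  simp only [hp, sum_const, card_univ, Fintype.card_fin, nsmul_eq_mul]
  field_simp

theorem gaussian_mixture_entropy_bound_general (N : ℕ)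
    (s p : Fin N → ℝ) (dmin γ : ℝ) (hγ : 0 ≤ γ) (hdmin_pos : 0 < dmin)
    (hdmin : ∀ i j : Fin N, i ≠ j → dmin ≤ |s i - s j|)
    (hp_nonneg : ∀ i, 0 ≤ p i) (hp_sum : ∑ i, p i = 1)
    (PY : ℝ → ℝ)
    (hPY : PY = fun y => ∑ i, p i * ((1 / Real.sqrt (2 * π)) *
      Real.exp (-(y - Real.sqrt γ * s i) ^ 2 / 2)))
    (hEnt_int : Integrable (fun y => PY y * Real.logb 2 (PY y))) :
    (-∫ y : ℝ, PY y * Real.logb 2 (PY y)) ≥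
      Real.logb 2 (Real.sqrt (4 * π)) -
        Real.logb 2 ((∑ i, (p i) ^ 2) +
          (1 - ∑ i, (p i) ^ 2) * Real.exp (-γ * dmin ^ 2 / 4)) ∧
    ((∀ i, p i = 1 / N) →
      (-∫ y : ℝ, PY y * Real.logb 2 (PY y)) ≥
        Real.logb 2 ((N : ℝ) * Real.sqrt (4 * π)) -
          Real.logb 2 (1 + ((N : ℝ) - 1) * Real.exp (-γ * dmin ^ 2 / 4))) := by
  set m : Fin N → ℝ := fun i => √γ * s i
  obtain rfl : PY = gaussianMixturePDFReal p m 1 := by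
    rw [hPY]; ext y; simp [gaussianMixturePDFReal, gaussianPDFReal, m]
  have hsep : ∀ i j, i ≠ j → √γ * dmin ≤ |m i - m j| := fun i j hij => by
    rw [← mul_sub, abs_mul, abs_of_nonneg (sqrt_nonneg γ)]
    exact mul_le_mul_of_nonneg_left (hdmin i j hij) (sqrt_nonneg γ)
  set B := ∑ i, p i ^ 2 + (1 - ∑ i, p i ^ 2) * exp (-γ * dmin ^ 2 / 4) with hB_def
  have hsq : ∫ y, gaussianMixturePDFReal p m 1 y ^ 2 ≤ (√(4 * π))⁻¹ * B := by
    convert integral_gaussianMixturePDFReal_one_sq_le hp_nonneg (by positivity) hsep using 5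
    · rw [hp_sum, one_pow]
    · rw [mul_pow, sq_sqrt hγ, neg_mul]
  have hsq_int := integrable_gaussianMixturePDFReal_sq p m one_ne_zero
  have hint : ∫ y, gaussianMixturePDFReal p m 1 y = 1 := by
    rw [integral_gaussianMixturePDFReal _ _ one_ne_zero, hp_sum]
  have hsq_pos := integral_sq_pos_of_integral_ne_zero hsq_int (by rw [hint]; exact one_ne_zero)
  have hB : 0 < B := pos_of_mul_pos_right (hsq_pos.trans_le hsq) (by positivity)
  have hent := (integral_mul_logb_le_logb_integral_sq one_lt_two
    (.of_forall (gaussianMixturePDFReal_nonneg _ hp_nonneg)) (integrable_gaussianMixturePDFReal _ _)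
    hint hsq_int hEnt_int).trans (logb_le_logb_of_le one_lt_two hsq_pos hsq)
  rw [logb_mul (by positivity) hB.ne', logb_inv] at hent
  refine ⟨by linarith, fun hunif => ?_⟩
  have hN₀ : N ≠ 0 := by rintro rfl; simp at hp_sum
  have hN : (0 : ℝ) < N := Nat.cast_pos.2 (Nat.pos_of_ne_zero hN₀)
  rw [hB_def, sum_sq_add_one_sub_sum_sq_mul_of_uniform hN₀ hunif] at hB hent
  rw [logb_div ((div_pos_iff_of_pos_right hN).1 hB).ne' hN.ne'] at hent
  rw [logb_mul hN.ne' (by positivity)]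
  linarith

/-- Entropy lower bound for a Gaussian mixture output
`P_Y(y) = Σ_i p_i N(y; √γ s_i, 1)` (means distinct, minimum distance
`d_min > 0`, probability weights `p`), assuming the entropy integral exists:
`h(Y) = -∫ P_Y log₂ P_Y ≥ log₂ √(4π) - log₂(Σ p_i² + (1-Σ p_i²)e^{-γ d_min²/4})`;
in particular for uniform weights `p_i = 1/N`,
`h(Y) ≥ log₂(N√(4π)) - log₂(1 + (N-1)e^{-γ d_min²/4})`. -/
theorem gaussian_mixture_entropy_bound (N : ℕ) (hN : 1 ≤ N)
    (s p : Fin N → ℝ) (dmin γ : ℝ) (hγ : 0 ≤ γ) (hdmin_pos : 0 < dmin)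
    (hdmin : ∀ i j : Fin N, i ≠ j → dmin ≤ |s i - s j|)
    (hp_nonneg : ∀ i, 0 ≤ p i) (hp_sum : ∑ i, p i = 1)
    (PY : ℝ → ℝ)
    (hPY : PY = fun y => ∑ i, p i * ((1 / Real.sqrt (2 * π)) *
      Real.exp (-(y - Real.sqrt γ * s i) ^ 2 / 2)))
    (hEnt_int : Integrable (fun y => PY y * Real.logb 2 (PY y))) :
    (-∫ y : ℝ, PY y * Real.logb 2 (PY y)) ≥
      Real.logb 2 (Real.sqrt (4 * π)) -
        Real.logb 2 ((∑ i, (p i) ^ 2) +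
          (1 - ∑ i, (p i) ^ 2) * Real.exp (-γ * dmin ^ 2 / 4)) ∧
    ((∀ i, p i = 1 / N) →
      (-∫ y : ℝ, PY y * Real.logb 2 (PY y)) ≥
        Real.logb 2 ((N : ℝ) * Real.sqrt (4 * π)) -
          Real.logb 2 (1 + ((N : ℝ) - 1) * Real.exp (-γ * dmin ^ 2 / 4))) :=
  gaussian_mixture_entropy_bound_general N s p dmin γ hγ hdmin_pos hdmin hp_nonneg hp_sum PY hPY
    hEnt_int
end
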